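/- Let G be a finite simple undirected graph, let v be a vertex of G, and let H_v be the auxiliary graph of v. Suppose that H_v is an s-skein for some s ≥ 1. Then there exists a solution S (a minimum-size modulator of G) with v ∉ S. -/

import Mathlib

variable {V : Type*}

/-- The graph obtained from `G` by deleting the vertex set `S`
(deleted vertices become isolated, which does not affect cluster-ness of the rest). -/
def SimpleGraph.deleteSet (G : SimpleGraph V) (S : Set V) : SimpleGraph V where
  Adj a b := G.Adj a b ∧ a ∉ S ∧ b ∉ S
  symm := by
    constructor
    intro a b h
    exact ⟨h.1.symm, h.2.2, h.2.1⟩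
  loopless := by
    constructor
    intro a h
    exact (G.ne_of_adj h.1) rfl

/-- `(u, v, w)` is a `P₃` in `G`: an induced path on the three distinct vertices
`u`, `v`, `w` with edges `uv` and `vw` and non-edge `uw`. -/
def IsP3 (G : SimpleGraph V) (u v w : V) : Prop :=
  G.Adj u v ∧ G.Adj v w ∧ ¬ G.Adj u w ∧ u ≠ w

/-- A cluster graph is a graph containing no `P₃`. -/
def IsClusterGraph (G : SimpleGraph V) : Prop :=
  ∀ u v w : V, ¬ IsP3 G u v w

/-- `S` is a modulator of `G`: deleting `S` from `G` yields a cluster graph. -/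
def IsModulator (G : SimpleGraph V) (S : Set V) : Prop :=
  IsClusterGraph (G.deleteSet S)

/-- A solution is a modulator of minimum cardinality. -/
def IsSolution (G : SimpleGraph V) (S : Set V) : Prop :=
  IsModulator G S ∧ ∀ T : Set V, IsModulator G T → S.ncard ≤ T.ncard

/-- `N1 G v` is the neighbourhood of `v` in `G`. -/
def N1 (G : SimpleGraph V) (v : V) : Set V := G.neighborSet v

/-- `N2 G v = N_G(N_G[v])` is the set of vertices at distance exactly `2` from `v`. -/
def N2 (G : SimpleGraph V) (v : V) : Set V :=
  {w | w ≠ v ∧ ¬ G.Adj v w ∧ ∃ u, G.Adj v u ∧ G.Adj u w}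

/-- Adjacency in the auxiliary graph `H_v`: non-edges of `G` inside `N1`,
and edges of `G` between `N1` and `N2`. -/
def HvAdj (G : SimpleGraph V) (v a b : V) : Prop :=
  (a ∈ N1 G v ∧ b ∈ N1 G v ∧ a ≠ b ∧ ¬ G.Adj a b) ∨
  (a ∈ N1 G v ∧ b ∈ N2 G v ∧ G.Adj a b) ∨
  (b ∈ N1 G v ∧ a ∈ N2 G v ∧ G.Adj a b)

/-- `X` is a vertex cover of the auxiliary graph `H_v`: a subset of
`V(H_v) = N1 ∪ N2` meeting every edge of `H_v`. -/
def IsVCHv (G : SimpleGraph V) (v : V) (X : Set V) : Prop :=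
  X ⊆ N1 G v ∪ N2 G v ∧ ∀ a b : V, HvAdj G v a b → a ∈ X ∨ b ∈ X

/-- `X` is a vertex cover of the graph `H`. -/
def IsVC (H : SimpleGraph V) (X : Set V) : Prop :=
  ∀ a b : V, H.Adj a b → a ∈ X ∨ b ∈ X

/-- The connected component of `v` in `G` is a clique. -/
def ComponentIsClique (G : SimpleGraph V) (v : V) : Prop :=
  ∀ u w : V, G.Reachable v u → G.Reachable v w → u ≠ w → G.Adj u w

/-- The auxiliary graph `H_v` is an `s`-skein with seagulls `(x i, y i, z i)`:
it is the disjoint union of `s` seagulls (paths on three vertices with middle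
vertex `y i ∈ N1` and endpoints `x i, z i ∈ N2`) and isolated vertices. -/
def IsSkein (G : SimpleGraph V) (v : V) (s : ℕ) (x y z : Fin s → V) : Prop :=
  (∀ i, x i ∈ N2 G v ∧ y i ∈ N1 G v ∧ z i ∈ N2 G v) ∧
  (∀ i, x i ≠ z i) ∧
  (∀ i j, i ≠ j → ({x i, y i, z i} ∩ {x j, y j, z j} : Set V) = ∅) ∧
  (∀ i, HvAdj G v (x i) (y i) ∧ HvAdj G v (y i) (z i) ∧ ¬ HvAdj G v (x i) (z i)) ∧
  (∀ a b : V, HvAdj G v a b →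
    ∃ i, (a = x i ∧ b = y i) ∨ (a = y i ∧ b = x i) ∨
         (a = y i ∧ b = z i) ∨ (a = z i ∧ b = y i))

/-!
Since `H_v` has no edges inside `N1`, the neighbourhood of `v` is a clique, so every `P₃`
through `v` has the form `v, y i, w` with `w` a wing of the `i`-th seagull. Take a solution `S`
containing `v`. By minimality `S \ {v}` is not a modulator, so some seagull `i` has `y i` and a
wing `w` outside `S`. Then `S` contains `y j` for every `j ≠ i` (else `w, y i, y j` is a `P₃`
avoiding `S`), hence exchanging `v` for `y i` gives a modulator of the same size avoiding `v`.
-/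

section Modulator

variable {G : SimpleGraph V} {S T : Set V} {v : V}

theorem IsP3.symm {a b c : V} (h : IsP3 G a b c) : IsP3 G c b a :=
  ⟨h.2.1.symm, h.1.symm, fun hca => h.2.2.1 hca.symm, h.2.2.2.symm⟩

theorem isP3_deleteSet_iff {a b c : V} :
    IsP3 (G.deleteSet S) a b c ↔ IsP3 G a b c ∧ a ∉ S ∧ b ∉ S ∧ c ∉ S := by
  simp only [IsP3, SimpleGraph.deleteSet]
  tauto

theorem isModulator_iff :
    IsModulator G S ↔ ∀ a b c, IsP3 G a b c → a ∈ S ∨ b ∈ S ∨ c ∈ S := by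
  simp only [IsModulator, IsClusterGraph, isP3_deleteSet_iff]
  grind

theorem exists_isSolution (G : SimpleGraph V) : ∃ S, IsSolution G S := by
  have hne : {S | IsModulator G S}.Nonempty :=
    ⟨Set.univ, isModulator_iff.2 fun a _ _ _ => Or.inl (Set.mem_univ a)⟩
  exact ⟨Function.argminOn Set.ncard _ hne, Function.argminOn_mem _ _ hne,
    fun T hT => not_lt.1 (Function.not_lt_argminOn Set.ncard _ hT)⟩

theorem IsSolution.of_ncard_le (hS : IsSolution G S) (hT : IsModulator G T)
    (hle : T.ncard ≤ S.ncard) : IsSolution G T :=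
  ⟨hT, fun U hU => hle.trans (hS.2 U hU)⟩

theorem IsSolution.not_isModulator_diff_singleton [Finite V] (hS : IsSolution G S)
    (hv : v ∈ S) : ¬ IsModulator G (S \ {v}) := fun h =>
  (Set.ncard_sdiff_singleton_lt_of_mem hv).not_ge (hS.2 _ h)

theorem IsModulator.exists_isP3_of_not_isModulator_diff_singleton (hS : IsModulator G S)
    (hdel : ¬ IsModulator G (S \ {v})) (hcenter : ∀ a c, ¬ IsP3 G a v c) :
    ∃ b c, IsP3 G v b c ∧ b ∉ S ∧ c ∉ S := by
  simp only [isModulator_iff, not_forall, not_or] at hdel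
  obtain ⟨a, b, c, hP, ha', hb', hc'⟩ := hdel
  have hout : ∀ w, w ∉ S \ {v} → w ≠ v → w ∉ S := fun w hw hwv hwS => hw ⟨hwS, hwv⟩
  have hin : ∀ w, w ∉ S \ {v} → w ∈ S → w = v := fun w hw hwS =>
    by_contra fun hwv => hw ⟨hwS, hwv⟩
  rcases isModulator_iff.1 hS a b c hP with ha | hb | hc
  · obtain rfl := hin a ha' ha
    exact ⟨b, c, hP, hout b hb' hP.1.ne', hout c hc' hP.2.2.2.symm⟩
  · obtain rfl := hin b hb' hb
    exact (hcenter a c hP).elim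
  · obtain rfl := hin c hc' hc
    exact ⟨b, a, hP.symm, hout b hb' hP.2.1.ne, hout a ha' hP.2.2.2⟩

theorem IsModulator.of_diff_singleton_subset (hS : IsModulator G S) (hST : S \ {v} ⊆ T)
    (hcenter : ∀ a c, ¬ IsP3 G a v c) (hend : ∀ b c, IsP3 G v b c → b ∈ T ∨ c ∈ T) :
    IsModulator G T := by
  refine isModulator_iff.2 fun a b c hP => ?_
  have hmem : ∀ w, w ∈ S → w ≠ v → w ∈ T := fun w hw hwv => hST ⟨hw, hwv⟩
  by_cases ha : a = v
  · subst ha; exact Or.inr (hend b c hP)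
  by_cases hb : b = v
  · subst hb; exact (hcenter a c hP).elim
  by_cases hc : c = v
  · subst hc; have := hend b a hP.symm; tauto
  rcases isModulator_iff.1 hS a b c hP with h | h | h
  · exact Or.inl (hmem a h ha)
  · exact Or.inr (Or.inl (hmem b h hb))
  · exact Or.inr (Or.inr (hmem c h hc))

end Modulator

namespace IsSkein

variable {G : SimpleGraph V} {v : V} {s : ℕ} {x y z : Fin s → V}
  (h : IsSkein G v s x y z)
include h

theorem eq_of_mem_of_mem {w : V} {i j : Fin s} (hi : w ∈ ({x i, y i, z i} : Set V))
    (hj : w ∈ ({x j, y j, z j} : Set V)) : i = j := by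
  by_contra hij
  exact (h.2.2.1 i j hij).subset ⟨hi, hj⟩

theorem adj_of_mem_n1 {a b : V} (ha : a ∈ N1 G v) (hb : b ∈ N1 G v) (hab : a ≠ b) :
    G.Adj a b := by
  by_contra hn
  have hn2 : ∀ i, x i ∉ N1 G v ∧ z i ∉ N1 G v := fun i =>
    ⟨fun h1 => (h.1 i).1.2.1 h1, fun h1 => (h.1 i).2.2.2.1 h1⟩
  obtain ⟨i, hi⟩ := h.2.2.2.2 a b (Or.inl ⟨ha, hb, hab, hn⟩)
  rcases hi with ⟨rfl, -⟩ | ⟨-, rfl⟩ | ⟨-, rfl⟩ | ⟨rfl, -⟩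
  · exact (hn2 i).1 ha
  · exact (hn2 i).1 hb
  · exact (hn2 i).2 hb
  · exact (hn2 i).2 ha

theorem not_isP3_center (a c : V) : ¬ IsP3 G a v c := fun hP =>
  hP.2.2.1 (h.adj_of_mem_n1 hP.1.symm hP.2.1 hP.2.2.2)

theorem exists_eq_of_isP3 {b c : V} (hP : IsP3 G v b c) :
    ∃ i, b = y i ∧ (c = x i ∨ c = z i) := by
  have hc : c ∈ N2 G v := ⟨hP.2.2.2.symm, hP.2.2.1, b, hP.1, hP.2.1⟩
  obtain ⟨i, hi⟩ := h.2.2.2.2 b c (Or.inr (Or.inl ⟨hP.1, hc, hP.2.1⟩))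
  rcases hi with ⟨rfl, -⟩ | ⟨rfl, rfl⟩ | ⟨rfl, rfl⟩ | ⟨rfl, -⟩
  · exact ((h.1 i).1.2.1 hP.1).elim
  · exact ⟨i, rfl, Or.inl rfl⟩
  · exact ⟨i, rfl, Or.inr rfl⟩
  · exact ((h.1 i).2.2.2.1 hP.1).elim

theorem eq_x_or_eq_z_of_isP3 {i : Fin s} {w : V} (hP : IsP3 G v (y i) w) :
    w = x i ∨ w = z i := by
  obtain ⟨j, hj, hw⟩ := h.exists_eq_of_isP3 hP
  obtain rfl : i = j := h.eq_of_mem_of_mem (w := y i) (by simp) (by simp [hj])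
  exact hw

theorem mem_of_isModulator {S : Set V} (hS : IsModulator G S) {i j : Fin s} {w : V}
    (hP : IsP3 G v (y i) w) (hyi : y i ∉ S) (hw : w ∉ S) (hji : j ≠ i) : y j ∈ S := by
  by_contra hyj
  have hwi := h.eq_x_or_eq_z_of_isP3 hP
  have hyy : G.Adj (y i) (y j) := h.adj_of_mem_n1 (h.1 i).2.1 (h.1 j).2.1 fun hij =>
    hji (h.eq_of_mem_of_mem (w := y i) (by simp) (by simp [hij])).symm
  have hwyj : ¬ G.Adj w (y j) := fun hadj => by
    have hwj := h.eq_x_or_eq_z_of_isP3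
      (⟨(h.1 j).2.1, hadj.symm, hP.2.2.1, hP.2.2.2⟩ : IsP3 G v (y j) w)
    exact hji (h.eq_of_mem_of_mem (w := w) (by rcases hwj with rfl | rfl <;> simp)
      (by rcases hwi with rfl | rfl <;> simp))
  have hP' : IsP3 G w (y i) (y j) :=
    ⟨hP.2.1.symm, hyy, hwyj, fun hw' => hP.2.2.1 (hw' ▸ (h.1 j).2.1)⟩
  rcases isModulator_iff.1 hS _ _ _ hP' with h' | h' | h' <;> contradiction

end IsSkein

theorem stmt_9_general [Fintype V] (G : SimpleGraph V) (v : V) (s : ℕ)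
    (x y z : Fin s → V) (hskein : IsSkein G v s x y z) :
    ∃ S : Set V, IsSolution G S ∧ v ∉ S := by
  obtain ⟨S, hS⟩ := exists_isSolution G
  by_cases hvS : v ∉ S
  · exact ⟨S, hS, hvS⟩
  rw [not_not] at hvS
  have hcenter := hskein.not_isP3_center
  obtain ⟨b, w, hP, hb, hw⟩ := hS.1.exists_isP3_of_not_isModulator_diff_singleton
    (hS.not_isModulator_diff_singleton hvS) hcenter
  obtain ⟨i, rfl, -⟩ := hskein.exists_eq_of_isP3 hP
  have hmod : IsModulator G (insert (y i) (S \ {v})) := by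
    refine hS.1.of_diff_singleton_subset (Set.subset_insert _ _) hcenter fun b c hP' => ?_
    obtain ⟨j, rfl, -⟩ := hskein.exists_eq_of_isP3 hP'
    rcases eq_or_ne j i with rfl | hji
    · exact Or.inl (Set.mem_insert _ _)
    · exact Or.inl (Set.mem_insert_of_mem _
        ⟨hskein.mem_of_isModulator hS.1 hP hb hw hji, hP'.1.ne'⟩)
  refine ⟨_, hS.of_ncard_le hmod (Set.ncard_exchange hb hvS).le, ?_⟩
  rintro (hvy | ⟨-, hvv⟩)
  · exact hP.1.ne hvy
  · exact hvv rfl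

/-- If `H_v` is an `s`-skein for some `s ≥ 1`, then there is a
solution not containing `v`. -/
theorem stmt_9 [Fintype V] (G : SimpleGraph V) (v : V) (s : ℕ) (hs : 1 ≤ s)
    (x y z : Fin s → V) (hskein : IsSkein G v s x y z) :
    ∃ S : Set V, IsSolution G S ∧ v ∉ S :=
  stmt_9_general G v s x y z hskein
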